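/- Let V be a finite type, let r, t ∈ V with r ≠ t, and let f : V → V → ℕ satisfy the flow-conservation conditions: for every v ∈ V, (Σ_{u∈V} f(v,u)) − (Σ_{u∈V} f(u,v)) equals 1 if v = r, equals −1 if v = t, and equals 0 otherwise (as integers). Then there exists a finite sequence of vertices v₀ = r, v₁, …, v_n = t such that f(v_i, v_{i+1}) > 0 for every 0 ≤ i < n; that is, t is reachable from r in the directed graph of arcs carrying positive flow. -/
import Mathlib


open Finset

/-- If a nonnegative-integer-valued flow `f` on a finite vertex set `V` has
divergence `1` at `r`, `-1` at `t ≠ r`, and `0` at every other vertex, then there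
is a finite sequence of vertices starting at `r` and ending at `t` whose
consecutive arcs all carry positive flow; i.e. `t` is reachable from `r` along
arcs with positive flow. -/
theorem flow_conservation_reachable {V : Type*} [Fintype V] [DecidableEq V]
    (r t : V) (hrt : r ≠ t) (f : V → V → ℕ)
    (hdiv : ∀ v : V,
      ((∑ u, (f v u : ℤ)) - ∑ u, (f u v : ℤ)) =
        if v = r then 1 else if v = t then -1 else 0) :
    Relation.ReflTransGen (fun u v => 0 < f u v) r t := by
  classical
  by_contra hreach
  set S : Finset V :=
    Finset.univ.filter (fun v => Relation.ReflTransGen (fun u v => 0 < f u v) r v) with hS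
  have hr : r ∈ S := by
    simp only [hS, Finset.mem_filter, Finset.mem_univ, true_and]
    exact Relation.ReflTransGen.refl
  have ht : t ∉ S := by simpa [hS] using hreach
  have hcut : ∀ u ∈ S, ∀ v ∉ S, f u v = 0 := by
    intro u hu v hv
    by_contra h
    apply hv
    simp only [hS, Finset.mem_filter, Finset.mem_univ, true_and] at hu ⊢
    exact hu.tail (Nat.pos_of_ne_zero h)
  have hsum : (∑ v ∈ S, ((∑ u, (f v u : ℤ)) - ∑ u, (f u v : ℤ)))
      = ∑ v ∈ S, (if v = r then (1:ℤ) else if v = t then -1 else 0) :=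
    Finset.sum_congr rfl (fun v _ => hdiv v)
  -- RHS equals 1
  have hrhs : (∑ v ∈ S, (if v = r then (1:ℤ) else if v = t then -1 else 0)) = 1 := by
    have : ∀ v ∈ S, (if v = r then (1:ℤ) else if v = t then -1 else 0)
        = (if v = r then (1:ℤ) else 0) := by
      intro v hv
      by_cases hvr : v = r
      · simp [hvr]
      · have hvt : v ≠ t := fun h => ht (h ▸ hv)
        simp [hvr, hvt]
    rw [Finset.sum_congr rfl this, Finset.sum_ite_eq' S r (fun _ => (1:ℤ))]
    simp [hr]
  -- LHS is nonpositive
  have hsplit : ∀ g : V → V → ℤ,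
      (∑ v ∈ S, ∑ u, g v u) = (∑ v ∈ S, ∑ u ∈ S, g v u) + ∑ v ∈ S, ∑ u ∈ Sᶜ, g v u := by
    intro g
    rw [← Finset.sum_add_distrib]
    refine Finset.sum_congr rfl fun v _ => ?_
    exact (Finset.sum_add_sum_compl S (g v)).symm
  have hlhs : (∑ v ∈ S, ((∑ u, (f v u : ℤ)) - ∑ u, (f u v : ℤ))) ≤ 0 := by
    rw [Finset.sum_sub_distrib, hsplit (fun v u => (f v u : ℤ)),
      hsplit (fun v u => (f u v : ℤ))]
    have hcomm : (∑ v ∈ S, ∑ u ∈ S, (f v u : ℤ)) = ∑ v ∈ S, ∑ u ∈ S, (f u v : ℤ) :=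
      Finset.sum_comm
    have hzero : (∑ v ∈ S, ∑ u ∈ Sᶜ, (f v u : ℤ)) = 0 := by
      refine Finset.sum_eq_zero fun v hv => Finset.sum_eq_zero fun u hu => ?_
      rw [Finset.mem_compl] at hu
      exact_mod_cast congrArg (Nat.cast : ℕ → ℤ) (hcut v hv u hu)
    have hnonneg : (0:ℤ) ≤ ∑ v ∈ S, ∑ u ∈ Sᶜ, (f u v : ℤ) :=
      Finset.sum_nonneg fun v _ => Finset.sum_nonneg fun u _ => Int.natCast_nonneg _
    rw [hcomm, hzero]
    linarith
  rw [hsum, hrhs] at hlhs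
  norm_num at hlhs
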